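/- arXiv:2408.16351 — 5 statements merged into one kernel-verified Lean document; each statement's English description precedes it below -/
import Mathlib

section
/- For any a > 1/2 and any nonzero real number b, the number ib (i the imaginary unit) is not a root of the quartic λ^4 + λ^3 + [1 + (1+a^2)r^2]λ^2 + r^2 λ + a^2 r^4 = 0 whenever r > 0. Consequently the quartic has no purely imaginary nonzero roots for r > 0. -/
/-- For `a > 1/2`, `b ≠ 0`, `r > 0`, the purely imaginary number `i b` is not a root of the
quartic `λ^4 + λ^3 + (1 + (1+a²)r²)λ² + r²λ + a²r⁴`. -/
theorem stmt0 (a b r : ℝ) (ha : 1/2 < a) (hb : b ≠ 0) (hr : 0 < r) :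
    (Complex.I * (b : ℂ))^4 + (Complex.I * (b : ℂ))^3
      + ((1 + (1 + a^2) * r^2 : ℝ) : ℂ) * (Complex.I * (b : ℂ))^2
      + ((r^2 : ℝ) : ℂ) * (Complex.I * (b : ℂ)) + ((a^2 * r^4 : ℝ) : ℂ) ≠ 0 := by
  intro h
  rw [Complex.ext_iff] at h
  obtain ⟨hre, him⟩ := h
  simp [Complex.add_re, Complex.add_im, Complex.mul_re, Complex.mul_im, pow_succ] at hre him
  have h0 : b * (r * r - b * b) = 0 := by linear_combination him
  rcases mul_eq_zero.mp h0 with h1 | h1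
  · exact hb h1
  · have hb2 : b * b = r * r := by linarith
    have h2 : r * r = 0 := by
      linear_combination (b*b + r*r - 1 - (1+a*a)*(r*r)) * hb2 - hre
    nlinarith [mul_pos hr hr]
end

section
/- If λ = ib with b ∈ ℝ \ {0} satisfies λ^4 + λ^3 + [1 + (1+a^2)r^2]λ^2 + r^2 λ + a^2 r^4 = 0 for some r > 0, then simultaneously b^4 − [1 + (1+a^2)r^2] b^2 + a^2 r^4 = 0 and b (b^2 − r^2) = 0; these two equations have no common solution when r > 0 and a > 1/2. -/
/-- If `λ = i b` (with `b ≠ 0`) is a root of the quartic, then the real and imaginary parts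
give the system `b⁴ - (1+(1+a²)r²)b² + a²r⁴ = 0` and `b(b² - r²) = 0`; moreover this system
has no solution when `r > 0` and `a > 1/2`. -/
theorem stmt1 (a b r : ℝ) (ha : 1/2 < a) (hb : b ≠ 0) (hr : 0 < r) :
    (((Complex.I * (b : ℂ))^4 + (Complex.I * (b : ℂ))^3
        + ((1 + (1 + a^2) * r^2 : ℝ) : ℂ) * (Complex.I * (b : ℂ))^2
        + ((r^2 : ℝ) : ℂ) * (Complex.I * (b : ℂ)) + ((a^2 * r^4 : ℝ) : ℂ) = 0) →
      (b^4 - (1 + (1 + a^2) * r^2) * b^2 + a^2 * r^4 = 0 ∧ b * (b^2 - r^2) = 0)) ∧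
    ¬ (b^4 - (1 + (1 + a^2) * r^2) * b^2 + a^2 * r^4 = 0 ∧ b * (b^2 - r^2) = 0) := by
  constructor
  · intro h
    rw [Complex.ext_iff] at h
    simp [Complex.ext_iff, pow_succ, mul_comm, mul_assoc, mul_left_comm] at h
    obtain ⟨h1, h2⟩ := h
    constructor <;> nlinarith [h1, h2]
  · rintro ⟨h1, h2⟩
    have hb2 : b^2 = r^2 := by
      rcases mul_eq_zero.1 h2 with h | h
      · exact absurd h hb
      · linarith
    rw [hb2] at h1
    nlinarith [mul_pos hr hr]
end

section
/- There exist constants C₂ ≥ C₁ > 0 and T₀ ≥ 1 such that for all t ≥ T₀, C₁ t^{3/4} ≤ (∫₀^{ε₀} (sin(c t r²))² r^{-4} e^{-2σ r² t} dr)^{1/2} ≤ C₂ t^{3/4}, i.e. the quantity I(t;2) := ‖χ(|ξ|≤ε₀) sin(c|ξ|²t) |ξ|^{-2} e^{-σ|ξ|²t}‖_{L²(ℝ)} satisfies I(t;2) ≈ t^{3/4} for large t. -/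
open MeasureTheory Real

/-- Pointwise bound `f r ≤ c² t²` for `r > 0`. -/
lemma stmt2_ptbound (c σ t r : ℝ) (hσ : 0 ≤ σ) (ht : 0 ≤ t) (hr : 0 < r) :
    (Real.sin (c * t * r^2))^2 * r ^ (-(4:ℝ)) * Real.exp (-2*σ*r^2*t) ≤ c^2 * t^2 := by
  have h1 : (Real.sin (c * t * r^2))^2 ≤ c^2 * t^2 * r^4 := by
    nlinarith [Real.sin_sq_le_sq (x := c * t * r^2)]
  have h2 : r ^ (-(4:ℝ)) = (r^4)⁻¹ := by
    rw [Real.rpow_neg hr.le, ← Real.rpow_natCast r 4]; norm_num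
  have h3 : Real.exp (-2*σ*r^2*t) ≤ 1 := by
    have h0 : 0 ≤ σ * r^2 * t := mul_nonneg (mul_nonneg hσ (sq_nonneg r)) ht
    exact Real.exp_le_one_iff.2 (by linarith)
  have hrp : (0:ℝ) < r^4 := by positivity
  calc (Real.sin (c * t * r^2))^2 * r ^ (-(4:ℝ)) * Real.exp (-2*σ*r^2*t)
      ≤ (c^2 * t^2 * r^4) * r ^ (-(4:ℝ)) * 1 := by
        apply mul_le_mul (mul_le_mul h1 le_rfl (Real.rpow_nonneg hr.le _) (by positivity)) h3
          (Real.exp_pos _).le (by positivity)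
    _ = c^2 * t^2 := by rw [h2]; field_simp
  
/-- nonnegativity of the integrand -/
lemma stmt2_nonneg (c σ t r : ℝ) (hr : 0 ≤ r) :
    0 ≤ (Real.sin (c * t * r^2))^2 * r ^ (-(4:ℝ)) * Real.exp (-2*σ*r^2*t) :=
  mul_nonneg (mul_nonneg (sq_nonneg _) (Real.rpow_nonneg hr _)) (Real.exp_pos _).le

lemma stmt2_integrable (c σ ε₀ t : ℝ) (hσ : 0 ≤ σ) (ht : 0 ≤ t) (hε : 0 < ε₀) :
    IntegrableOn (fun r : ℝ =>
      (Real.sin (c * t * r^2))^2 * r ^ (-(4:ℝ)) * Real.exp (-2*σ*r^2*t))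
      (Set.Ioc 0 ε₀) := by
  refine Measure.integrableOn_of_bounded (M := c^2 * t^2) ?_ ?_ ?_
  · exact (measure_Ioc_lt_top).ne
  · apply Measurable.aestronglyMeasurable
    fun_prop
  · rw [ae_restrict_iff' measurableSet_Ioc]
    filter_upwards with r hr
    rw [Real.norm_eq_abs, abs_of_nonneg (stmt2_nonneg c σ t r hr.1.le)]
    exact stmt2_ptbound c σ t r hσ ht hr.1

set_option maxHeartbeats 1000000 in
/-- Optimal growth estimate `I(t;2) ≈ t^{3/4}` for large time. -/
theorem stmt2 (c σ ε₀ : ℝ) (hc : 0 < c) (hσ : 0 < σ) (hε : 0 < ε₀) (hε1 : ε₀ ≤ 1) :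
    ∃ C₁ C₂ T₀ : ℝ, 0 < C₁ ∧ C₁ ≤ C₂ ∧ 1 ≤ T₀ ∧ ∀ t ≥ T₀,
      C₁ * t ^ ((3:ℝ)/4) ≤
        Real.sqrt (∫ r in (0:ℝ)..ε₀,
          (Real.sin (c * t * r^2))^2 * r ^ (-(4:ℝ)) * Real.exp (-2*σ*r^2*t)) ∧
      Real.sqrt (∫ r in (0:ℝ)..ε₀,
          (Real.sin (c * t * r^2))^2 * r ^ (-(4:ℝ)) * Real.exp (-2*σ*r^2*t))
        ≤ C₂ * t ^ ((3:ℝ)/4) := by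
  have hπ := Real.pi_pos
  set β := Real.sqrt (π/(2*c)) with hβdef
  set α := Real.sqrt (π/(4*c)) with hαdef
  have hβpos : 0 < β := Real.sqrt_pos.2 (by positivity)
  have hαpos : 0 < α := Real.sqrt_pos.2 (by positivity)
  have hβ2 : β^2 = π/(2*c) := Real.sq_sqrt (by positivity)
  have hα2 : α^2 = π/(4*c) := Real.sq_sqrt (by positivity)
  have hαβ : α < β := by
    apply Real.sqrt_lt_sqrt (by positivity)
    rw [div_lt_div_iff₀ (by positivity) (by positivity)]
    nlinarith only [hπ, hc]
  set E := Real.exp (-(π*σ/c)) with hEdef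
  have hEpos : 0 < E := Real.exp_pos _
  set K := (1/2) * E * β^(-(4:ℝ)) * (β - α) with hKdef
  have hβrp : 0 < β^(-(4:ℝ)) := Real.rpow_pos_of_pos hβpos _
  have hKpos : 0 < K := by
    have := sub_pos.2 hαβ
    positivity
  refine ⟨Real.sqrt K, Real.sqrt K + Real.sqrt (c^2 + 1/3), max 1 (π/(2*c)) / ε₀^2,
    Real.sqrt_pos.2 hKpos, le_add_of_nonneg_right (Real.sqrt_nonneg _), ?_, ?_⟩
  · rw [le_div_iff₀ (by positivity)]
    calc (1:ℝ) * ε₀^2 ≤ 1 := by nlinarith only [hε, hε1]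
      _ ≤ max 1 (π/(2*c)) := le_max_left _ _
  intro t ht
  have hM : max 1 (π/(2*c)) ≤ t * ε₀^2 := (div_le_iff₀ (by positivity)).1 ht
  have hT1 : (1:ℝ) ≤ t := by
    have h1 : (1:ℝ) ≤ t * ε₀^2 := le_trans (le_max_left _ _) hM
    have hε2 : ε₀^2 ≤ 1 := by nlinarith only [hε, hε1]
    have ht0' : 0 < t := by nlinarith only [h1, sq_nonneg ε₀]
    have h3 := mul_le_mul_of_nonneg_left hε2 ht0'.le
    nlinarith only [h1, h3]
  have ht0 : (0:ℝ) < t := lt_of_lt_of_le one_pos hT1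
  set u := Real.sqrt t with hu
  have hu0 : 0 < u := Real.sqrt_pos.2 ht0
  have hu2 : u^2 = t := Real.sq_sqrt ht0.le
  -- key rpow identity : sqrt (u^3) = t^(3/4)
  have hu34 : Real.sqrt (u^3) = t ^ ((3:ℝ)/4) := by
    rw [hu, Real.sqrt_eq_rpow, ← Real.rpow_natCast (Real.sqrt t) 3, Real.sqrt_eq_rpow,
      ← Real.rpow_mul ht0.le, ← Real.rpow_mul ht0.le]
    norm_num
  -- scale inequalities
  have hεu2 : (ε₀*u)^2 = t * ε₀^2 := by rw [mul_pow, hu2]; ring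
  have hscale1 : (1:ℝ) ≤ ε₀ * u := by
    have h1 : (1:ℝ) ≤ (ε₀*u)^2 := by
      rw [hεu2]; exact le_trans (le_max_left 1 (π/(2*c))) hM
    have h2 := Real.sqrt_le_sqrt h1
    rwa [Real.sqrt_one, Real.sqrt_sq (by positivity)] at h2
  have hscale2 : β ≤ ε₀ * u := by
    have h1 : β^2 ≤ (ε₀*u)^2 := by
      rw [hβ2, hεu2]; exact le_trans (le_max_right 1 (π/(2*c))) hM
    have h2 := Real.sqrt_le_sqrt h1
    rwa [Real.sqrt_sq hβpos.le, Real.sqrt_sq (by positivity)] at h2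
  set f : ℝ → ℝ := fun r =>
    (Real.sin (c * t * r^2))^2 * r ^ (-(4:ℝ)) * Real.exp (-2*σ*r^2*t) with hf
  have hInt : IntegrableOn f (Set.Ioc 0 ε₀) := stmt2_integrable c σ ε₀ t hσ.le ht0.le hε
  have hII : ∀ p q : ℝ, 0 ≤ p → q ≤ ε₀ → p ≤ q → IntervalIntegrable f volume p q := by
    intro p q hp hq hpq
    rw [intervalIntegrable_iff_integrableOn_Ioc_of_le hpq]
    exact hInt.mono_set (Set.Ioc_subset_Ioc hp hq)
  set δ : ℝ := u⁻¹ with hδdef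
  have hδ0 : 0 < δ := by positivity
  have hδε : δ ≤ ε₀ := by
    rw [hδdef, inv_eq_one_div, div_le_iff₀ hu0]; exact hscale1
  -- the three sample points for the lower bound
  set a' : ℝ := α * u⁻¹ with ha'def
  set b' : ℝ := β * u⁻¹ with hb'def
  have ha'0 : 0 < a' := by positivity
  have hab' : a' ≤ b' := by
    apply mul_le_mul_of_nonneg_right hαβ.le (by positivity)
  have hb'ε : b' ≤ ε₀ := by
    rw [hb'def, mul_comm, ← div_eq_inv_mul, div_le_iff₀ hu0]; exact hscale2
  have hiu2t : (u⁻¹)^2 * t = 1 := by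
    rw [← hu2]; field_simp
  constructor
  · -- LOWER BOUND
    set m : ℝ := (1/2) * b'^(-(4:ℝ)) * E with hm
    have hb'0 : 0 < b' := lt_of_lt_of_le ha'0 hab'
    have hmid : m * (b' - a') ≤ ∫ r in a'..b', f r := by
      have h1 : ∫ r in a'..b', m = m * (b' - a') := by
        rw [intervalIntegral.integral_const, smul_eq_mul]; ring
      rw [← h1]
      apply intervalIntegral.integral_mono_on hab' (intervalIntegrable_const) (hII a' b' ha'0.le hb'ε hab')
      intro r hr
      have hr0 : 0 < r := lt_of_lt_of_le ha'0 hr.1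
      -- bound on the phase
      have hθlow : π/4 ≤ c * t * r^2 := by
        have h2 : a'^2 ≤ r^2 := pow_le_pow_left₀ ha'0.le hr.1 2
        have h4 : c * t * a'^2 = π/4 := by
          have h5 : c * t * a'^2 = c * α^2 * ((u⁻¹)^2 * t) := by rw [ha'def]; ring
          rw [h5, hiu2t, mul_one, hα2]
          field_simp
        calc π/4 = c * t * a'^2 := h4.symm
          _ ≤ c * t * r^2 := mul_le_mul_of_nonneg_left h2 (by positivity)
      have hθhigh : c * t * r^2 ≤ π/2 := by
        have h2 : r^2 ≤ b'^2 := pow_le_pow_left₀ hr0.le hr.2 2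
        have h4 : c * t * b'^2 = π/2 := by
          have h5 : c * t * b'^2 = c * β^2 * ((u⁻¹)^2 * t) := by rw [hb'def]; ring
          rw [h5, hiu2t, mul_one, hβ2]
          field_simp
        calc c * t * r^2 ≤ c * t * b'^2 := mul_le_mul_of_nonneg_left h2 (by positivity)
          _ = π/2 := h4
      have hsin : Real.sqrt 2 / 2 ≤ Real.sin (c * t * r^2) := by
        rw [← Real.sin_pi_div_four]
        apply Real.sin_le_sin_of_le_of_le_pi_div_two (by linarith) hθhigh (by linarith)
      have hsin2 : (1:ℝ)/2 ≤ (Real.sin (c * t * r^2))^2 := by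
        have h2 : (Real.sqrt 2 / 2)^2 = 1/2 := by
          rw [div_pow, Real.sq_sqrt (by norm_num : (0:ℝ) ≤ 2)]; norm_num
        have h6 := mul_self_le_mul_self (by positivity : (0:ℝ) ≤ Real.sqrt 2 / 2) hsin
        nlinarith only [h6, h2]
      have hrp : b'^(-(4:ℝ)) ≤ r ^ (-(4:ℝ)) :=
        Real.rpow_le_rpow_of_nonpos hr0 hr.2 (by norm_num)
      have hexp : E ≤ Real.exp (-2*σ*r^2*t) := by
        rw [hEdef]
        apply Real.exp_le_exp.2
        have h2 : r^2 ≤ b'^2 := pow_le_pow_left₀ (lt_of_lt_of_le ha'0 hr.1).le hr.2 2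
        have h3 : 2 * σ * (b'^2 * t) = π*σ/c := by
          have h5 : b'^2 * t = β^2 * ((u⁻¹)^2 * t) := by rw [hb'def]; ring
          rw [h5, hiu2t, mul_one, hβ2]
          field_simp
        have h6 : 2*σ*t*r^2 ≤ 2*σ*t*b'^2 :=
          mul_le_mul_of_nonneg_left h2 (by positivity)
        linarith only [h6, h3]
      calc m = (1/2) * b'^(-(4:ℝ)) * E := rfl
        _ ≤ (Real.sin (c * t * r^2))^2 * r ^ (-(4:ℝ)) * Real.exp (-2*σ*r^2*t) := by
            apply mul_le_mul (mul_le_mul hsin2 hrp (Real.rpow_pos_of_pos hb'0 _).le (sq_nonneg _)) hexp hEpos.le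
            exact mul_nonneg (sq_nonneg _) (Real.rpow_nonneg hr0.le _)
        _ = f r := rfl
    have hsplit1 : (∫ r in (0:ℝ)..a', f r) + ∫ r in a'..ε₀, f r = ∫ r in (0:ℝ)..ε₀, f r :=
      intervalIntegral.integral_add_adjacent_intervals (hII 0 a' le_rfl (le_trans hab' hb'ε) ha'0.le)
        (hII a' ε₀ ha'0.le le_rfl (le_trans hab' hb'ε))
    have hsplit2 : (∫ r in a'..b', f r) + ∫ r in b'..ε₀, f r = ∫ r in a'..ε₀, f r :=
      intervalIntegral.integral_add_adjacent_intervals (hII a' b' ha'0.le hb'ε hab')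
        (hII b' ε₀ hb'0.le le_rfl hb'ε)
    have hpos1 : 0 ≤ ∫ r in (0:ℝ)..a', f r := by
      apply intervalIntegral.integral_nonneg ha'0.le
      intro r hr; exact stmt2_nonneg c σ t r hr.1
    have hpos2 : 0 ≤ ∫ r in b'..ε₀, f r := by
      apply intervalIntegral.integral_nonneg hb'ε
      intro r hr; exact stmt2_nonneg c σ t r (le_trans hb'0.le hr.1)
    have hlow : K * u^3 ≤ ∫ r in (0:ℝ)..ε₀, f r := by
      have hKu : K * u^3 = m * (b' - a') := by
        have hb'rp : b'^(-(4:ℝ)) = β^(-(4:ℝ)) * u^4 := by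
          rw [hb'def, Real.mul_rpow hβpos.le (by positivity), ← Real.rpow_natCast u 4,
            ← Real.rpow_neg_one u, ← Real.rpow_mul hu0.le]
          norm_num
        rw [hm, hb'rp, hKdef, hb'def, ha'def]
        field_simp
      rw [hKu]
      calc m * (b' - a') ≤ ∫ r in a'..b', f r := hmid
        _ ≤ (∫ r in a'..b', f r) + ∫ r in b'..ε₀, f r := by linarith only [hpos2]
        _ = ∫ r in a'..ε₀, f r := hsplit2
        _ ≤ (∫ r in (0:ℝ)..a', f r) + ∫ r in a'..ε₀, f r := by linarith only [hpos1]
        _ = ∫ r in (0:ℝ)..ε₀, f r := hsplit1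
    calc Real.sqrt K * t ^ ((3:ℝ)/4) = Real.sqrt (K * u^3) := by
          rw [Real.sqrt_mul hKpos.le, hu34]
      _ ≤ Real.sqrt (∫ r in (0:ℝ)..ε₀, f r) := Real.sqrt_le_sqrt hlow
  · -- UPPER BOUND
    have hsplit : (∫ r in (0:ℝ)..δ, f r) + ∫ r in δ..ε₀, f r = ∫ r in (0:ℝ)..ε₀, f r :=
      intervalIntegral.integral_add_adjacent_intervals (hII 0 δ le_rfl hδε hδ0.le)
        (hII δ ε₀ hδ0.le le_rfl hδε)
    have hb1 : ∫ r in (0:ℝ)..δ, f r ≤ c^2 * u^3 := by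
      have h1 : ∫ r in (0:ℝ)..δ, f r ≤ ∫ r in (0:ℝ)..δ, (c^2*t^2 : ℝ) := by
        apply intervalIntegral.integral_mono_on hδ0.le (hII 0 δ le_rfl hδε hδ0.le)
          intervalIntegrable_const
        intro r hr
        rcases eq_or_lt_of_le hr.1 with h | h
        · rw [hf]; simp [← h]
          positivity
        · exact stmt2_ptbound c σ t r hσ.le ht0.le h
      rw [intervalIntegral.integral_const, smul_eq_mul] at h1
      have h2 : (δ - 0) * (c^2*t^2) = c^2 * u^3 := by
        rw [hδdef, ← hu2]; field_simp; ring
      linarith only [h1, h2]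
    have hb2 : ∫ r in δ..ε₀, f r ≤ u^3 / 3 := by
      have h1 : ∫ r in δ..ε₀, f r ≤ ∫ r in δ..ε₀, r ^ (-(4:ℝ)) := by
        apply intervalIntegral.integral_mono_on hδε (hII δ ε₀ hδ0.le le_rfl hδε)
        · apply intervalIntegral.intervalIntegrable_rpow
          right
          rw [Set.uIcc_of_le hδε]
          intro hmem
          exact absurd hmem.1 (by linarith)
        intro r hr
        have hr0 : 0 < r := lt_of_lt_of_le hδ0 hr.1
        have hs1 : (Real.sin (c*t*r^2))^2 ≤ 1 := Real.sin_sq_le_one _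
        have he1 : Real.exp (-2*σ*r^2*t) ≤ 1 := by
          have h0 : 0 ≤ σ * r^2 * t := by positivity
          exact Real.exp_le_one_iff.2 (by linarith only [h0])
        calc (Real.sin (c*t*r^2))^2 * r ^ (-(4:ℝ)) * Real.exp (-2*σ*r^2*t)
            ≤ 1 * r ^ (-(4:ℝ)) * 1 := by
              apply mul_le_mul (mul_le_mul hs1 le_rfl (Real.rpow_nonneg hr0.le _) (by norm_num))
                he1 (Real.exp_pos _).le (by positivity)
          _ = r ^ (-(4:ℝ)) := by ring
      have h2 : ∫ r in δ..ε₀, r ^ (-(4:ℝ)) = (ε₀ ^ ((-(4:ℝ))+1) - δ ^ ((-(4:ℝ))+1)) / ((-(4:ℝ))+1) := by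
        apply integral_rpow
        right
        constructor
        · norm_num
        · rw [Set.uIcc_of_le hδε]
          intro hmem
          exact absurd hmem.1 (by linarith)
      have h3 : δ ^ ((-(4:ℝ))+1) = u^3 := by
        rw [hδdef, ← Real.rpow_neg_one u, ← Real.rpow_mul hu0.le, ← Real.rpow_natCast u 3]
        norm_num
      have h4 : 0 ≤ ε₀ ^ ((-(4:ℝ))+1) := Real.rpow_nonneg hε.le _
      calc ∫ r in δ..ε₀, f r ≤ (ε₀ ^ ((-(4:ℝ))+1) - δ ^ ((-(4:ℝ))+1)) / ((-(4:ℝ))+1) :=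
            h1.trans h2.le
        _ = (δ ^ ((-(4:ℝ))+1) - ε₀ ^ ((-(4:ℝ))+1)) / 3 := by ring_nf
        _ ≤ δ ^ ((-(4:ℝ))+1) / 3 := by
            rw [div_le_div_iff_of_pos_right (by norm_num : (0:ℝ) < 3)]
            exact sub_le_self _ h4
        _ = u^3 / 3 := by rw [h3]
    have hup : ∫ r in (0:ℝ)..ε₀, f r ≤ (c^2 + 1/3) * u^3 := by
      rw [← hsplit]; linarith only [hb1, hb2]
    calc Real.sqrt (∫ r in (0:ℝ)..ε₀, f r) ≤ Real.sqrt ((c^2 + 1/3) * u^3) :=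
          Real.sqrt_le_sqrt hup
      _ = Real.sqrt (c^2 + 1/3) * t ^ ((3:ℝ)/4) := by
          rw [Real.sqrt_mul (by positivity), hu34]
      _ ≤ (Real.sqrt K + Real.sqrt (c^2 + 1/3)) * t ^ ((3:ℝ)/4) := by
          apply mul_le_mul_of_nonneg_right (le_add_of_nonneg_left (Real.sqrt_nonneg _))
            (Real.rpow_nonneg ht0.le _)
end

section
/- There exist constants C₂ ≥ C₁ > 0 and T₀ ≥ 1 such that for all t ≥ T₀, C₁ t^{1/4} ≤ (∫₀^{ε₀} (sin(c t r²))² r^{-2} e^{-2σ r² t} dr)^{1/2} ≤ C₂ t^{1/4}, i.e. I(t;1) := ‖χ(|ξ|≤ε₀) sin(c|ξ|²t) |ξ|^{-1} e^{-σ|ξ|²t}‖_{L²} satisfies I(t;1) ≈ t^{1/4} for large t. -/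
open MeasureTheory Set

private lemma sin_lb_aux {x : ℝ} (h1 : 1/4 ≤ x) (h2 : x ≤ 1) : 3/16 ≤ Real.sin x := by
  have h3 := Real.sin_gt_sub_cube (by linarith : 0 < x)
  nlinarith [sq_nonneg (x-1), sq_nonneg x,
    mul_nonneg (sub_nonneg.2 h2) (by linarith : (0:ℝ) ≤ x - 1/4)]

set_option maxHeartbeats 1000000 in
/-- Optimal growth estimate `I(t;1) ≈ t^{1/4}` for large time. -/
theorem stmt3 (c σ ε₀ : ℝ) (hc : 0 < c) (hσ : 0 < σ) (hε : 0 < ε₀) (hε1 : ε₀ ≤ 1) :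
    ∃ C₁ C₂ T₀ : ℝ, 0 < C₁ ∧ C₁ ≤ C₂ ∧ 1 ≤ T₀ ∧ ∀ t ≥ T₀,
      C₁ * t ^ ((1:ℝ)/4) ≤
        Real.sqrt (∫ r in (0:ℝ)..ε₀,
          (Real.sin (c * t * r^2))^2 * r ^ (-(2:ℝ)) * Real.exp (-2*σ*r^2*t)) ∧
      Real.sqrt (∫ r in (0:ℝ)..ε₀,
          (Real.sin (c * t * r^2))^2 * r ^ (-(2:ℝ)) * Real.exp (-2*σ*r^2*t))
        ≤ C₂ * t ^ ((1:ℝ)/4) := by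
  set J : ℝ := ∫ x in Ioi (0:ℝ), x^2 * Real.exp (-(2*σ) * x^2) with hJdef
  have hJ0 : 0 ≤ J := by
    apply setIntegral_nonneg measurableSet_Ioi
    intro x _
    positivity
  set K₁ : ℝ := (9/512) * Real.exp (-(2*σ/c)) * Real.sqrt c with hK₁def
  have hK₁pos : 0 < K₁ := by positivity
  refine ⟨Real.sqrt K₁, max (Real.sqrt K₁) (Real.sqrt (c^2*J)), max 1 (1/(c*ε₀^2)),
    Real.sqrt_pos.2 hK₁pos, le_max_left _ _, le_max_left _ _, ?_⟩
  intro t ht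
  have ht1 : (1:ℝ) ≤ t := le_trans (le_max_left _ _) ht
  have ht0 : (0:ℝ) < t := lt_of_lt_of_le one_pos ht1
  set f : ℝ → ℝ := fun r =>
    (Real.sin (c * t * r^2))^2 * r ^ (-(2:ℝ)) * Real.exp (-2*σ*r^2*t) with hfdef
  set g : ℝ → ℝ := fun r => c^2*t^2 * (r^2 * Real.exp (-(2*σ*t) * r^2)) with hgdef
  have hrpow : ∀ r : ℝ, 0 < r → r ^ (-(2:ℝ)) = (r^2)⁻¹ := by
    intro r hr
    rw [Real.rpow_neg hr.le, show ((2:ℝ)) = ((2:ℕ):ℝ) by norm_num, Real.rpow_natCast]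
  -- integrability of g on Ioi 0
  have hg : IntegrableOn g (Ioi 0) := by
    have h2 : IntegrableOn (fun x : ℝ => x ^ (2:ℝ) * Real.exp (-(2*σ*t) * x ^ 2)) (Ioi 0) :=
      integrableOn_rpow_mul_exp_neg_mul_sq (by positivity) (by norm_num)
    have h2' : IntegrableOn (fun x : ℝ => x ^ 2 * Real.exp (-(2*σ*t) * x ^ 2)) (Ioi 0) := by
      refine h2.congr_fun (fun x _ => ?_) measurableSet_Ioi
      dsimp only; rw [show ((2:ℝ)) = ((2:ℕ):ℝ) by norm_num, Real.rpow_natCast]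
    exact h2'.const_mul _
  -- pointwise comparison f ≤ g on positive reals
  have hfg : ∀ r : ℝ, 0 < r → f r ≤ g r := by
    intro r hr
    have hsin : (Real.sin (c*t*r^2))^2 ≤ (c*t*r^2)^2 := Real.sin_sq_le_sq
    have hexp : Real.exp (-2*σ*r^2*t) = Real.exp (-(2*σ*t) * r^2) := by ring_nf
    simp only [hfdef, hgdef, hrpow r hr, hexp]
    have h1 : (Real.sin (c*t*r^2))^2 * (r^2)⁻¹ ≤ (c*t*r^2)^2 * (r^2)⁻¹ :=
      mul_le_mul_of_nonneg_right hsin (by positivity)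
    have h2 : (c*t*r^2)^2 * (r^2)⁻¹ = c^2*t^2*r^2 := by
      field_simp
    calc (Real.sin (c*t*r^2))^2 * (r^2)⁻¹ * Real.exp (-(2*σ*t) * r^2)
        ≤ (c*t*r^2)^2 * (r^2)⁻¹ * Real.exp (-(2*σ*t) * r^2) :=
          mul_le_mul_of_nonneg_right h1 (Real.exp_pos _).le
      _ = c^2*t^2 * (r^2 * Real.exp (-(2*σ*t) * r^2)) := by rw [h2]; ring
  have hf_nonneg : ∀ r : ℝ, 0 ≤ r → 0 ≤ f r := by
    intro r hr
    exact mul_nonneg (mul_nonneg (sq_nonneg _) (Real.rpow_nonneg hr _)) (Real.exp_pos _).le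
  have hfmeas : Measurable f := by fun_prop
  -- integrability of f on Ioc 0 ε₀
  have hfint : IntegrableOn f (Ioc 0 ε₀) := by
    refine Integrable.mono' (hg.mono_set Ioc_subset_Ioi_self) hfmeas.aestronglyMeasurable ?_
    filter_upwards [ae_restrict_mem measurableSet_Ioc] with r hr
    rw [Real.norm_eq_abs, abs_of_nonneg (hf_nonneg r hr.1.le)]
    exact hfg r hr.1
  have hfII : IntervalIntegrable f volume 0 ε₀ := by
    rw [intervalIntegrable_iff, uIoc_of_le hε.le]
    exact hfint
  -- upper bound on the integral
  have hgpos : ∀ r : ℝ, 0 ≤ g r := by intro r; positivity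
  have hsqrt_t : (0:ℝ) < Real.sqrt t := Real.sqrt_pos.2 ht0
  have hup : ∫ r in (0:ℝ)..ε₀, f r ≤ c^2 * J * Real.sqrt t := by
    rw [intervalIntegral.integral_of_le hε.le]
    have step1 : ∫ r in Ioc (0:ℝ) ε₀, f r ≤ ∫ r in Ioc (0:ℝ) ε₀, g r :=
      setIntegral_mono_on hfint (hg.mono_set Ioc_subset_Ioi_self) measurableSet_Ioc
        (fun r hr => hfg r hr.1)
    have step2 : ∫ r in Ioc (0:ℝ) ε₀, g r ≤ ∫ r in Ioi (0:ℝ), g r :=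
      setIntegral_mono_set hg (Filter.Eventually.of_forall hgpos)
        Ioc_subset_Ioi_self.eventuallyLE
    have hscale := integral_comp_mul_left_Ioi
      (fun s => s^2 * Real.exp (-(2*σ) * s^2)) 0 hsqrt_t
    simp only [mul_zero, smul_eq_mul] at hscale
    have hss : Real.sqrt t * Real.sqrt t = t := Real.mul_self_sqrt ht0.le
    have hlhs : (∫ x in Ioi (0:ℝ), (Real.sqrt t * x)^2 * Real.exp (-(2*σ) * (Real.sqrt t * x)^2))
        = t * ∫ x in Ioi (0:ℝ), x^2 * Real.exp (-(2*σ*t) * x^2) := by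
      rw [← integral_const_mul]
      congr 1
      ext x
      rw [mul_pow, show Real.sqrt t ^ 2 = t by rw [sq, hss]]
      ring_nf
    rw [hlhs] at hscale
    have hint_val : (∫ x in Ioi (0:ℝ), x^2 * Real.exp (-(2*σ*t) * x^2))
        = t⁻¹ * ((Real.sqrt t)⁻¹ * J) := by
      rw [hJdef, ← hscale, inv_mul_cancel_left₀ ht0.ne']
    have hgval : ∫ r in Ioi (0:ℝ), g r = c^2 * J * Real.sqrt t := by
      simp only [hgdef]
      rw [integral_const_mul, hint_val]
      have : t ^ 2 * (t⁻¹ * ((Real.sqrt t)⁻¹ * J)) = J * Real.sqrt t := by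
        field_simp
        linear_combination (-J)*hss
      rw [mul_assoc, this]
      ring
    linarith [step1, step2, hgval.le]
  -- lower bound on the integral
  have hct : (0:ℝ) < c * t := by positivity
  have hsct : (0:ℝ) < Real.sqrt (c*t) := Real.sqrt_pos.2 hct
  have hsct_sq : Real.sqrt (c*t) * Real.sqrt (c*t) = c*t := Real.mul_self_sqrt hct.le
  set a : ℝ := 1/(2*Real.sqrt (c*t)) with hadef
  set b₁ : ℝ := 1/Real.sqrt (c*t) with hbdef
  have ha0 : 0 < a := by positivity
  have hab : a ≤ b₁ := by
    rw [hadef, hbdef]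
    apply div_le_div_of_nonneg_left one_pos.le hsct
    linarith
  have hb₁ε : b₁ ≤ ε₀ := by
    have hTc : 1/(c*ε₀^2) ≤ t := le_trans (le_max_right _ _) ht
    have h1 : 1/ε₀^2 ≤ c * t := by
      rw [div_le_iff₀ (by positivity)] at hTc
      rw [div_le_iff₀ (by positivity)]
      nlinarith
    have h2 : 1/ε₀ ≤ Real.sqrt (c*t) := by
      have := Real.sqrt_le_sqrt h1
      rwa [show (1:ℝ)/ε₀^2 = (1/ε₀)^2 by ring, Real.sqrt_sq (by positivity)] at this
    rw [hbdef, div_le_iff₀ hsct]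
    rw [div_le_iff₀ hε] at h2
    nlinarith
  set m : ℝ := (9/256) * (c*t) * Real.exp (-(2*σ/c)) with hmdef
  have hlow_pt : ∀ r ∈ Icc a b₁, m ≤ f r := by
    intro r hr
    have hr0 : 0 < r := lt_of_lt_of_le ha0 hr.1
    have hra : a^2 ≤ r^2 := by nlinarith [hr.1, ha0]
    have hrb : r^2 ≤ b₁^2 := by nlinarith [hr.2, hr0]
    have ha2 : a^2 = 1/(4*(c*t)) := by
      rw [hadef, div_pow, one_pow, mul_pow, Real.sq_sqrt hct.le]; norm_num
    have hb2 : b₁^2 = 1/(c*t) := by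
      rw [hbdef, div_pow, one_pow, Real.sq_sqrt hct.le]
    obtain ⟨x, hxdef⟩ : ∃ x, x = c*t*r^2 := ⟨_, rfl⟩
    have hx4 : (1:ℝ)/4 ≤ x := by
      rw [hxdef]
      rw [ha2] at hra
      calc (1:ℝ)/4 = (c*t) * (1/(4*(c*t))) := by field_simp
        _ ≤ c*t*r^2 := mul_le_mul_of_nonneg_left hra hct.le
    have hx1 : x ≤ 1 := by
      rw [hxdef]
      rw [hb2] at hrb
      calc c*t*r^2 ≤ (c*t) * (1/(c*t)) := mul_le_mul_of_nonneg_left hrb hct.le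
        _ = 1 := by field_simp
    have hsin : (3:ℝ)/16 ≤ Real.sin x := sin_lb_aux hx4 hx1
    have hsin2 : (9:ℝ)/256 ≤ (Real.sin x)^2 := by
      have := pow_le_pow_left₀ (by norm_num : (0:ℝ) ≤ 3/16) hsin 2
      norm_num at this
      linarith
    have hinv : c*t ≤ (r^2)⁻¹ := by
      rw [hb2] at hrb
      have h := one_div_le_one_div_of_le (by positivity : (0:ℝ) < r^2) hrb
      rwa [one_div_one_div, one_div] at h
    have hexp : Real.exp (-(2*σ/c)) ≤ Real.exp (-2*σ*r^2*t) := by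
      apply Real.exp_le_exp.2
      rw [hb2] at hrb
      have hrt : r^2 * t ≤ 1/c := by
        calc r^2*t ≤ (1/(c*t))*t := mul_le_mul_of_nonneg_right hrb ht0.le
          _ = 1/c := by field_simp
      have h2 := mul_le_mul_of_nonneg_left hrt (by positivity : (0:ℝ) ≤ 2*σ)
      have h3 : 2*σ*(1/c) = 2*σ/c := by ring
      linarith [h2, h3]
    have : m ≤ (Real.sin x)^2 * (r^2)⁻¹ * Real.exp (-2*σ*r^2*t) := by
      rw [hmdef]
      have h1 : (9/256) * (c*t) ≤ (Real.sin x)^2 * (r^2)⁻¹ :=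
        mul_le_mul hsin2 hinv hct.le (sq_nonneg _)
      calc (9/256) * (c*t) * Real.exp (-(2*σ/c))
          ≤ ((Real.sin x)^2 * (r^2)⁻¹) * Real.exp (-(2*σ/c)) :=
            mul_le_mul_of_nonneg_right h1 (Real.exp_pos _).le
        _ ≤ (Real.sin x)^2 * (r^2)⁻¹ * Real.exp (-2*σ*r^2*t) :=
            mul_le_mul_of_nonneg_left hexp (by positivity)
    rw [hxdef] at this
    simp only [hfdef]
    rw [hrpow r hr0]
    exact this
  have hlow : K₁ * Real.sqrt t ≤ ∫ r in (0:ℝ)..ε₀, f r := by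
    have hIab : IntervalIntegrable f volume a b₁ := by
      apply hfII.mono_set
      rw [Set.uIcc_of_le hab, Set.uIcc_of_le hε.le]
      exact Icc_subset_Icc ha0.le hb₁ε
    have h1 : ∫ _ in a..b₁, m ≤ ∫ r in a..b₁, f r :=
      intervalIntegral.integral_mono_on hab intervalIntegrable_const hIab hlow_pt
    have h2 : ∫ r in a..b₁, f r ≤ ∫ r in (0:ℝ)..ε₀, f r := by
      apply intervalIntegral.integral_mono_interval ha0.le hab hb₁ε _ hfII
      filter_upwards [ae_restrict_mem measurableSet_Ioc] with r hr
      exact hf_nonneg r hr.1.le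
    have hconst : ∫ _ in a..b₁, m = m * (b₁ - a) := by
      rw [intervalIntegral.integral_const, smul_eq_mul]; ring
    have hba : b₁ - a = 1/(2*Real.sqrt (c*t)) := by
      rw [hadef, hbdef]
      field_simp
      ring
    have hval : m * (b₁ - a) = K₁ * Real.sqrt t := by
      rw [hmdef, hba, hK₁def]
      calc (9/256) * (c*t) * Real.exp (-(2*σ/c)) * (1/(2*Real.sqrt (c*t)))
          = (9/512) * Real.exp (-(2*σ/c)) * (c*t/Real.sqrt (c*t)) := by ring
        _ = (9/512) * Real.exp (-(2*σ/c)) * Real.sqrt (c*t) := by rw [Real.div_sqrt]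
        _ = (9/512) * Real.exp (-(2*σ/c)) * (Real.sqrt c * Real.sqrt t) := by
            rw [Real.sqrt_mul hc.le]
        _ = (9/512) * Real.exp (-(2*σ/c)) * Real.sqrt c * Real.sqrt t := by ring
    linarith [h1, h2, hconst, hval]
  -- conclude with square roots
  have hquarter : Real.sqrt (Real.sqrt t) = t ^ ((1:ℝ)/4) := by
    rw [Real.sqrt_eq_rpow, Real.sqrt_eq_rpow, ← Real.rpow_mul ht0.le]
    norm_num
  constructor
  · calc Real.sqrt K₁ * t ^ ((1:ℝ)/4)
        = Real.sqrt K₁ * Real.sqrt (Real.sqrt t) := by rw [hquarter]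
      _ = Real.sqrt (K₁ * Real.sqrt t) := (Real.sqrt_mul hK₁pos.le _).symm
      _ ≤ Real.sqrt (∫ r in (0:ℝ)..ε₀, f r) := Real.sqrt_le_sqrt hlow
  · calc Real.sqrt (∫ r in (0:ℝ)..ε₀, f r)
        ≤ Real.sqrt (c^2 * J * Real.sqrt t) := Real.sqrt_le_sqrt hup
      _ = Real.sqrt (c^2*J) * Real.sqrt (Real.sqrt t) := Real.sqrt_mul (by positivity) _
      _ = Real.sqrt (c^2*J) * t ^ ((1:ℝ)/4) := by rw [hquarter]
      _ ≤ max (Real.sqrt K₁) (Real.sqrt (c^2*J)) * t ^ ((1:ℝ)/4) :=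
          mul_le_mul_of_nonneg_right (le_max_right _ _) (Real.rpow_nonneg ht0.le _)
end

section
/- There exist constants C₂ ≥ C₁ > 0 and T₀ ≥ 1 such that for all t ≥ T₀, C₁ t^{-1/4} ≤ (∫₀^{ε₀} (sin(c t r²))² e^{-2σ r² t} dr)^{1/2} ≤ C₂ t^{-1/4}, i.e. I(t;0) := ‖χ(|ξ|≤ε₀) sin(c|ξ|²t) e^{-σ|ξ|²t}‖_{L²} decays with the sharp rate t^{-1/4} for large t. -/
open MeasureTheory

/-- Optimal decay estimate `I(t;0) ≈ t^{-1/4}` for large time. -/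
theorem stmt4 (c σ ε₀ : ℝ) (hc : 0 < c) (hσ : 0 < σ) (hε : 0 < ε₀) (hε1 : ε₀ ≤ 1) :
    ∃ C₁ C₂ T₀ : ℝ, 0 < C₁ ∧ C₁ ≤ C₂ ∧ 1 ≤ T₀ ∧ ∀ t ≥ T₀,
      C₁ * t ^ (-(1:ℝ)/4) ≤
        Real.sqrt (∫ r in (0:ℝ)..ε₀,
          (Real.sin (c * t * r^2))^2 * Real.exp (-2*σ*r^2*t)) ∧
      Real.sqrt (∫ r in (0:ℝ)..ε₀,
          (Real.sin (c * t * r^2))^2 * Real.exp (-2*σ*r^2*t))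
        ≤ C₂ * t ^ (-(1:ℝ)/4) := by
  set g : ℝ → ℝ := fun u => (Real.sin (c * u^2))^2 * Real.exp (-2*σ*u^2) with hg
  have hgcont : Continuous g := by fun_prop
  have hgnn : ∀ u, 0 ≤ g u := fun u => mul_nonneg (sq_nonneg _) (Real.exp_pos _).le
  set δ : ℝ := min ε₀ (Real.sqrt (Real.pi/(2*c))) with hδ
  have hπc : 0 < Real.pi/(2*c) := div_pos Real.pi_pos (by linarith)
  have hδpos : 0 < δ := lt_min hε (Real.sqrt_pos.mpr hπc)
  have hδε : δ ≤ ε₀ := min_le_left _ _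
  have hδsq : δ^2 ≤ Real.pi/(2*c) := by
    have := min_le_right ε₀ (Real.sqrt (Real.pi/(2*c)))
    calc δ^2 ≤ (Real.sqrt (Real.pi/(2*c)))^2 :=
          pow_le_pow_left₀ hδpos.le this 2
      _ = Real.pi/(2*c) := Real.sq_sqrt hπc.le
  set K₁ : ℝ := ∫ u in (0:ℝ)..δ, g u with hK₁
  have hK₁pos : 0 < K₁ := by
    apply intervalIntegral.intervalIntegral_pos_of_pos_on
      (hgcont.intervalIntegrable 0 δ) _ hδpos
    intro u hu
    have hu0 : 0 < u := hu.1
    have huδ : u < δ := hu.2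
    have h1 : 0 < c * u^2 := by positivity
    have h2 : c * u^2 < Real.pi := by
      have : u^2 < δ^2 := by nlinarith
      have : c * u^2 < c * (Real.pi/(2*c)) := by nlinarith
      have hcc : c * (Real.pi/(2*c)) = Real.pi/2 := by field_simp
      nlinarith [Real.pi_pos]
    have := Real.sin_pos_of_pos_of_lt_pi h1 h2
    have : (0:ℝ) < (Real.sin (c * u^2))^2 := by positivity
    exact mul_pos this (Real.exp_pos _)
  set K₂ : ℝ := ∫ u in Set.Ioi (0:ℝ), Real.exp (-(2*σ)*u^2) with hK₂
  have hexpint : Integrable (fun u : ℝ => Real.exp (-(2*σ)*u^2)) :=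
    integrable_exp_neg_mul_sq (by linarith)
  have hupper : ∀ A : ℝ, 0 ≤ A → (∫ u in (0:ℝ)..A, g u) ≤ K₂ := by
    intro A hA
    rw [intervalIntegral.integral_of_le hA]
    calc (∫ u in Set.Ioc (0:ℝ) A, g u)
        ≤ ∫ u in Set.Ioc (0:ℝ) A, Real.exp (-(2*σ)*u^2) := by
          apply setIntegral_mono_on (hgcont.integrableOn_Ioc) hexpint.integrableOn
            measurableSet_Ioc
          intro u _
          have : (Real.sin (c * u^2))^2 ≤ 1 := by
            have := Real.neg_one_le_sin (c*u^2)
            have := Real.sin_le_one (c*u^2)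
            nlinarith
          have he : (-2*σ*u^2 : ℝ) = -(2*σ)*u^2 := by ring
          simp only [hg, he]
          nlinarith [Real.exp_pos (-(2*σ)*u^2)]
      _ ≤ K₂ := by
          apply setIntegral_mono_set hexpint.integrableOn
          · filter_upwards with u using (Real.exp_pos _).le
          · exact (Set.Ioc_subset_Ioi_self).eventuallyLE
  have hK₁K₂ : K₁ ≤ K₂ := hupper δ hδpos.le
  refine ⟨Real.sqrt K₁, Real.sqrt K₂, 1, Real.sqrt_pos.mpr hK₁pos,
    Real.sqrt_le_sqrt hK₁K₂, le_refl 1, ?_⟩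
  intro t ht
  have ht0 : (0:ℝ) < t := lt_of_lt_of_le one_pos ht
  have hst : 0 < Real.sqrt t := Real.sqrt_pos.mpr ht0
  have hst1 : 1 ≤ Real.sqrt t := by
    rw [show (1:ℝ) = Real.sqrt 1 by simp]; exact Real.sqrt_le_sqrt ht
  -- change of variables
  have h1 : ∀ r : ℝ, (Real.sin (c * t * r^2))^2 * Real.exp (-2*σ*r^2*t)
      = g (Real.sqrt t * r) := by
    intro r
    simp only [hg, mul_pow, Real.sq_sqrt ht0.le]
    ring_nf
  have key : (∫ r in (0:ℝ)..ε₀, (Real.sin (c * t * r^2))^2 * Real.exp (-2*σ*r^2*t))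
      = (Real.sqrt t)⁻¹ * ∫ u in (0:ℝ)..(Real.sqrt t * ε₀), g u := by
    simp_rw [h1]
    rw [intervalIntegral.integral_comp_mul_left g hst.ne', mul_zero, smul_eq_mul]
  set J : ℝ := ∫ u in (0:ℝ)..(Real.sqrt t * ε₀), g u with hJ
  have hJlb : K₁ ≤ J := by
    apply intervalIntegral.integral_mono_interval le_rfl hδpos.le
      (hδε.trans (le_mul_of_one_le_left hε.le hst1))
      _ (hgcont.intervalIntegrable _ _)
    filter_upwards with u using hgnn u
  have hJub : J ≤ K₂ := hupper _ (by positivity)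
  have hpow : Real.sqrt ((Real.sqrt t)⁻¹) = t ^ (-(1:ℝ)/4) := by
    rw [Real.sqrt_inv, Real.sqrt_eq_rpow, Real.sqrt_eq_rpow, ← Real.rpow_mul ht0.le,
      ← Real.rpow_neg ht0.le]
    norm_num
  rw [key, Real.sqrt_mul (inv_nonneg.2 hst.le), hpow]
  have hrp : 0 ≤ t ^ (-(1:ℝ)/4) := Real.rpow_nonneg ht0.le _
  constructor
  · rw [mul_comm]
    exact mul_le_mul_of_nonneg_left (Real.sqrt_le_sqrt hJlb) hrp
  · rw [mul_comm (Real.sqrt K₂)]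
    exact mul_le_mul_of_nonneg_left (Real.sqrt_le_sqrt hJub) hrp
end
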